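/- Define V : ℝ → ℝ by V(θ) = −80·(2421541645 − 515181045616·θ(1−θ)) / (13⁹·(901 − 443072·θ(1−θ))). Then the denominator 901 − 443072·θ(1−θ) is nonzero for all θ ∈ [49/100, 1/2], V is strictly decreasing on [49/100, 1/2], and V(1/2) = −16655514960/(181·13⁹). -/

import Mathlib

/-!
Writing `t = θ(1 - θ)`, the value is a linear fractional function of `t` whose denominator is
negative on the relevant range and whose coefficient determinant has the sign that makes it
decreasing; and `t` increases with `θ` up to `θ = 1/2`.
-/

/-- The value of the correlated cooperative game on the final θ-interval. -/
noncomputable def valueFn (θ : ℝ) : ℝ :=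
  -80 * (2421541645 - 515181045616 * (θ * (1 - θ)))
    / (13 ^ 9 * (901 - 443072 * (θ * (1 - θ))))

theorem div_affine_sub_div_affine {𝕜 : Type*} [Field 𝕜] (a b c d s t : 𝕜)
    (hs : c + d * s ≠ 0) (ht : c + d * t ≠ 0) :
    (a + b * s) / (c + d * s) - (a + b * t) / (c + d * t)
      = (t - s) * (a * d - b * c) / ((c + d * s) * (c + d * t)) := by
  rw [div_sub_div _ _ hs ht]
  ring

theorem strictAntiOn_div_affine_of_neg {𝕜 : Type*} [Field 𝕜] [LinearOrder 𝕜]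
    [IsStrictOrderedRing 𝕜] {a b c d : 𝕜} (h : b * c < a * d) :
    StrictAntiOn (fun t => (a + b * t) / (c + d * t)) {t | c + d * t < 0} := by
  intro s hs t ht hst
  rw [← sub_pos, div_affine_sub_div_affine a b c d s t hs.ne ht.ne]
  exact div_pos (mul_pos (sub_pos.mpr hst) (sub_pos.mpr h)) (mul_pos_of_neg_of_neg hs ht)

theorem strictMonoOn_mul_one_sub_self :
    StrictMonoOn (fun θ : ℝ => θ * (1 - θ)) (Set.Iic (1 / 2)) := by
  intro a _ b (hb : b ≤ 1 / 2) hab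
  have key : b * (1 - b) - a * (1 - a) = (b - a) * (1 - a - b) := by ring
  linarith [mul_pos (sub_pos.mpr hab) (by linarith : (0 : ℝ) < 1 - a - b)]

theorem valueFn_denom_neg {θ : ℝ} (hθ : θ ∈ Set.Icc (49 / 100 : ℝ) (1 / 2)) :
    (901 : ℝ) - 443072 * (θ * (1 - θ)) < 0 := by
  nlinarith [mul_nonneg (sub_nonneg.mpr hθ.1) (sub_nonneg.mpr hθ.2)]

theorem valueFn_eq (θ : ℝ) :
    valueFn θ = (-80 * 2421541645 + 80 * 515181045616 * (θ * (1 - θ)))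
      / (13 ^ 9 * 901 + -13 ^ 9 * 443072 * (θ * (1 - θ))) := by
  unfold valueFn
  ring_nf

/-- On `[49/100, 1/2]` the denominator is nonzero, `V` is strictly decreasing,
and `V(1/2) = −16655514960/(181·13⁹)`. -/
theorem valueFn_strictAnti :
    (∀ θ ∈ Set.Icc (49 / 100 : ℝ) (1 / 2),
        (901 : ℝ) - 443072 * (θ * (1 - θ)) ≠ 0) ∧
      StrictAntiOn valueFn (Set.Icc (49 / 100 : ℝ) (1 / 2)) ∧
      valueFn (1 / 2) = -16655514960 / (181 * 13 ^ 9) := by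
  refine ⟨fun θ hθ => (valueFn_denom_neg hθ).ne, ?_, by norm_num [valueFn]⟩
  have hanti := strictAntiOn_div_affine_of_neg (𝕜 := ℝ) (a := -80 * 2421541645)
    (b := 80 * 515181045616) (c := 13 ^ 9 * 901) (d := -13 ^ 9 * 443072) (by norm_num)
  have hcomp := hanti.comp_strictMonoOn
    (strictMonoOn_mul_one_sub_self.mono Set.Icc_subset_Iic_self)
    fun θ hθ => by change (_ : ℝ) < 0; linarith [valueFn_denom_neg hθ]
  simpa only [Function.comp_def, ← valueFn_eq] using hcomp
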